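/- For two estimated no-show rates p₁ < p₂ in (0,1), the Kopach show-up functions satisfy q^{p₁}_j > q^{p₂}_j for all j ≥ 0, and consequently T(K; q^{p₁}) ≥ T(K; q^{p₂}) for every K in the M/M/1/K reward model (monotonicity of clinic reward in the no-show rate). -/

import Mathlib

/-! Raising the no-show rate `p` lowers each show-up probability `q^p_j`, because the factor
`1 - e^{-0.017 j}/2` multiplying `p` is positive. The reward `T(K; q)` is `λ` times a
nonnegative combination of the `q_j` plus terms independent of `q`, so it is monotone in `q`. -/

open Finset

noncomputable section

/-- `q^p_j`. -/
def kopachShowUp (p : ℝ) (j : ℕ) : ℝ :=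
  1 - p * (1 - 0.5 * Real.exp (-0.017 * (j : ℝ)))

/-- `Π_j(K)`, with `ρ = λ / μ`. -/
def mm1kProb (ρ : ℝ) (K j : ℕ) : ℝ :=
  (1 - ρ) * ρ ^ j / (1 - ρ ^ (K + 1))

/-- `T(K; q)`. -/
def mm1kReward (lam mu ξ θ ρ : ℝ) (K : ℕ) (q : ℕ → ℝ) : ℝ :=
  lam * ∑ j ∈ range K, mm1kProb ρ K j * q j + mu * ξ * mm1kProb ρ K 0
    - lam * θ * mm1kProb ρ K K

end

lemma one_sub_half_exp_neg_pos {c x : ℝ} (hc : 0 ≤ c) (hx : 0 ≤ x) :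
    0 < 1 - 0.5 * Real.exp (-c * x) := by
  have : Real.exp (-c * x) ≤ 1 := Real.exp_le_one_iff.mpr (by nlinarith)
  linarith

lemma kopachShowUp_lt_of_lt {p₁ p₂ : ℝ} (h : p₁ < p₂) (j : ℕ) :
    kopachShowUp p₂ j < kopachShowUp p₁ j := by
  have := one_sub_half_exp_neg_pos (c := 0.017) (by norm_num) (Nat.cast_nonneg' j)
  unfold kopachShowUp
  nlinarith

/-- For `ρ ≥ 0` the factors `1 - ρ` and `1 - ρ^(K+1)` have the same sign; at `ρ = 1` the
quotient is `0` by Lean's convention `x / 0 = 0`. -/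
lemma mm1kProb_nonneg {ρ : ℝ} (hρ : 0 ≤ ρ) (K j : ℕ) : 0 ≤ mm1kProb ρ K j := by
  unfold mm1kProb
  rw [mul_div_right_comm]
  refine mul_nonneg ?_ (pow_nonneg hρ j)
  rcases le_total ρ 1 with h | h
  · exact div_nonneg (by linarith) (by linarith [pow_le_one₀ hρ h (n := K + 1)])
  · exact div_nonneg_of_nonpos (by linarith) (by linarith [one_le_pow₀ h (n := K + 1)])

lemma mm1kReward_mono {lam mu ξ θ ρ : ℝ} (hlam : 0 ≤ lam) (hρ : 0 ≤ ρ) (K : ℕ)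
    {q q' : ℕ → ℝ} (hq : ∀ j, q j ≤ q' j) :
    mm1kReward lam mu ξ θ ρ K q ≤ mm1kReward lam mu ξ θ ρ K q' := by
  have hsum : ∑ j ∈ range K, mm1kProb ρ K j * q j ≤ ∑ j ∈ range K, mm1kProb ρ K j * q' j :=
    sum_le_sum fun j _ => mul_le_mul_of_nonneg_left (hq j) (mm1kProb_nonneg hρ K j)
  unfold mm1kReward
  gcongr

theorem mm1k_reward_monotone_in_noshow_rate_general (lam mu ξ θ ρ p₁ p₂ : ℝ)
    (hlam : 0 < lam)
    (hρ : ρ ∈ Set.Ioo (0:ℝ) 1) (hlt : p₁ < p₂) :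
    (∀ j : ℕ, 1 - p₂ * (1 - 0.5 * Real.exp (-0.017 * (j : ℝ)))
      < 1 - p₁ * (1 - 0.5 * Real.exp (-0.017 * (j : ℝ)))) ∧
    ∀ K : ℕ,
      lam * ∑ j ∈ Finset.range K, (1 - ρ) * ρ ^ j / (1 - ρ ^ (K + 1)) *
          (1 - p₂ * (1 - 0.5 * Real.exp (-0.017 * (j : ℝ))))
          + mu * ξ * ((1 - ρ) / (1 - ρ ^ (K + 1)))
          - lam * θ * ((1 - ρ) * ρ ^ K / (1 - ρ ^ (K + 1)))
        ≤ lam * ∑ j ∈ Finset.range K, (1 - ρ) * ρ ^ j / (1 - ρ ^ (K + 1)) *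
          (1 - p₁ * (1 - 0.5 * Real.exp (-0.017 * (j : ℝ))))
          + mu * ξ * ((1 - ρ) / (1 - ρ ^ (K + 1)))
          - lam * θ * ((1 - ρ) * ρ ^ K / (1 - ρ ^ (K + 1))) := by
  refine ⟨kopachShowUp_lt_of_lt hlt, fun K => ?_⟩
  have h := mm1kReward_mono (mu := mu) (ξ := ξ) (θ := θ) hlam.le hρ.1.le K
    fun j => (kopachShowUp_lt_of_lt hlt j).le
  simpa only [mm1kReward, mm1kProb, kopachShowUp, pow_zero, mul_one] using h

/-- For no-show rates `p₁ < p₂` in `(0,1)`, the Kopach show-up functions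
satisfy `q^{p₁}_j > q^{p₂}_j` for all `j`, and consequently the M/M/1/K reward
satisfies `T(K; q^{p₁}) ≥ T(K; q^{p₂})` for every `K`. -/
theorem mm1k_reward_monotone_in_noshow_rate (lam mu ξ θ ρ p₁ p₂ : ℝ)
    (hlam : 0 < lam) (hmu : 0 < mu) (hξ : 0 ≤ ξ) (hθ : 0 ≤ θ)
    (hρ : ρ ∈ Set.Ioo (0:ℝ) 1) (hp₁ : p₁ ∈ Set.Ioo (0:ℝ) 1)
    (hp₂ : p₂ ∈ Set.Ioo (0:ℝ) 1) (hlt : p₁ < p₂) :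
    (∀ j : ℕ, 1 - p₂ * (1 - 0.5 * Real.exp (-0.017 * (j : ℝ)))
      < 1 - p₁ * (1 - 0.5 * Real.exp (-0.017 * (j : ℝ)))) ∧
    ∀ K : ℕ,
      lam * ∑ j ∈ Finset.range K, (1 - ρ) * ρ ^ j / (1 - ρ ^ (K + 1)) *
          (1 - p₂ * (1 - 0.5 * Real.exp (-0.017 * (j : ℝ))))
          + mu * ξ * ((1 - ρ) / (1 - ρ ^ (K + 1)))
          - lam * θ * ((1 - ρ) * ρ ^ K / (1 - ρ ^ (K + 1)))
        ≤ lam * ∑ j ∈ Finset.range K, (1 - ρ) * ρ ^ j / (1 - ρ ^ (K + 1)) *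
          (1 - p₁ * (1 - 0.5 * Real.exp (-0.017 * (j : ℝ))))
          + mu * ξ * ((1 - ρ) / (1 - ρ ^ (K + 1)))
          - lam * θ * ((1 - ρ) * ρ ^ K / (1 - ρ ^ (K + 1))) :=
  mm1k_reward_monotone_in_noshow_rate_general lam mu ξ θ ρ p₁ p₂ hlam hρ hlt
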